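/- Let ν, α, β, λ > 0, γ ∈ (0,1), f ∈ ℓ²(ℤ), and F(u) = νΛu - α uD⁻u + β u(1-u)(u-γ) - λu + f as in the Burgers-Huxley lattice system. Then F is Lipschitz on every ball B_r = {u ∈ ℓ² : ‖u‖ ≤ r} with Lipschitz constant L_r = 4ν + 2√5·rα + β√(12r²(1+γ)² + 27r⁴ + 3γ²) + λ, i.e., ‖F(u) - F(v)‖ ≤ L_r‖u - v‖ for all u, v ∈ B_r. -/

import Mathlib

open scoped ENNReal
set_option maxHeartbeats 1000000

private lemma bh_toReal : ((2:ℝ≥0∞)).toReal = 2 := by norm_num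

private lemma bh_mem_abs (x : lp (fun _ : ℤ => ℝ) 2) (e : ℤ ≃ ℤ) :
    Memℓp (fun i => |x (e i)|) 2 := by
  apply memℓp_gen
  have h := (lp.memℓp x).summable (p := 2) (by norm_num)
  have h2 : Summable ((fun i => ‖x i‖ ^ (2:ℝ≥0∞).toReal) ∘ e) := e.summable_iff.mpr h
  simpa [Function.comp_def, Real.norm_eq_abs, abs_abs] using h2

private lemma bh_norm_abs (x : lp (fun _ : ℤ => ℝ) 2) (e : ℤ ≃ ℤ) :
    ‖(⟨fun i => |x (e i)|, bh_mem_abs x e⟩ : lp (fun _ : ℤ => ℝ) 2)‖ = ‖x‖ := by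
  rw [lp.norm_eq_tsum_rpow (by norm_num) _, lp.norm_eq_tsum_rpow (by norm_num) x]
  congr 1
  have : ∀ i : ℤ, ‖(⟨fun i => |x (e i)|, bh_mem_abs x e⟩ : lp (fun _ : ℤ => ℝ) 2) i‖
      ^ (2:ℝ≥0∞).toReal = (fun j => ‖x j‖ ^ (2:ℝ≥0∞).toReal) (e i) := by
    intro i; simp [Real.norm_eq_abs, abs_abs]
  rw [tsum_congr this, e.tsum_eq (fun j => ‖x j‖ ^ (2:ℝ≥0∞).toReal)]

private lemma bh_norm_mono {g h : lp (fun _ : ℤ => ℝ) 2} (hle : ∀ i, ‖g i‖ ≤ ‖h i‖) :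
    ‖g‖ ≤ ‖h‖ := by
  rw [lp.norm_eq_tsum_rpow (by norm_num) g, lp.norm_eq_tsum_rpow (by norm_num) h]
  apply Real.rpow_le_rpow (tsum_nonneg fun i => by positivity)
  · exact Summable.tsum_le_tsum (fun i => Real.rpow_le_rpow (norm_nonneg _) (hle i) (by norm_num))
      ((lp.memℓp g).summable (by norm_num)) ((lp.memℓp h).summable (by norm_num))
  · norm_num

/-- Master bound: if `|D i| ≤ c1|x(i-1)| + c2|x i| + c3|x(i+1)|` then `‖D‖ ≤ (c1+c2+c3)‖x‖`. -/
private lemma bh_master (x D : lp (fun _ : ℤ => ℝ) 2) (c1 c2 c3 : ℝ)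
    (h1 : 0 ≤ c1) (h2 : 0 ≤ c2) (h3 : 0 ≤ c3)
    (h : ∀ i : ℤ, |D i| ≤ c1 * |x (i - 1)| + c2 * |x i| + c3 * |x (i + 1)|) :
    ‖D‖ ≤ (c1 + c2 + c3) * ‖x‖ := by
  set e1 : ℤ ≃ ℤ := Equiv.subRight (1:ℤ)
  set e2 : ℤ ≃ ℤ := Equiv.refl ℤ
  set e3 : ℤ ≃ ℤ := Equiv.addRight (1:ℤ)
  set A1 : lp (fun _ : ℤ => ℝ) 2 := ⟨fun i => |x (e1 i)|, bh_mem_abs x e1⟩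
  set A2 : lp (fun _ : ℤ => ℝ) 2 := ⟨fun i => |x (e2 i)|, bh_mem_abs x e2⟩
  set A3 : lp (fun _ : ℤ => ℝ) 2 := ⟨fun i => |x (e3 i)|, bh_mem_abs x e3⟩
  have hA1 : ∀ i : ℤ, A1 i = |x (i - 1)| := fun i => rfl
  have hA2 : ∀ i : ℤ, A2 i = |x i| := fun i => rfl
  have hA3 : ∀ i : ℤ, A3 i = |x (i + 1)| := fun i => rfl
  set H : lp (fun _ : ℤ => ℝ) 2 := c1 • A1 + c2 • A2 + c3 • A3 with hH
  have hHi : ∀ i : ℤ, H i = c1 * |x (i - 1)| + c2 * |x i| + c3 * |x (i + 1)| := by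
    intro i
    simp only [hH, lp.coeFn_add, lp.coeFn_smul, Pi.add_apply, Pi.smul_apply, smul_eq_mul,
      hA1 i, hA2 i, hA3 i]
  have hDH : ‖D‖ ≤ ‖H‖ := by
    apply bh_norm_mono
    intro i
    rw [Real.norm_eq_abs, Real.norm_eq_abs, hHi i]
    exact (h i).trans (le_abs_self _)
  have hHnorm : ‖H‖ ≤ c1 * ‖x‖ + c2 * ‖x‖ + c3 * ‖x‖ := by
    calc ‖H‖ ≤ ‖c1 • A1 + c2 • A2‖ + ‖c3 • A3‖ := norm_add_le _ _
    _ ≤ ‖c1 • A1‖ + ‖c2 • A2‖ + ‖c3 • A3‖ := by linarith [norm_add_le (c1 • A1) (c2 • A2)]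
    _ = c1 * ‖A1‖ + c2 * ‖A2‖ + c3 * ‖A3‖ := by
        rw [norm_smul, norm_smul, norm_smul, Real.norm_eq_abs, Real.norm_eq_abs,
          Real.norm_eq_abs, abs_of_nonneg h1, abs_of_nonneg h2, abs_of_nonneg h3]
    _ = c1 * ‖x‖ + c2 * ‖x‖ + c3 * ‖x‖ := by
        rw [bh_norm_abs x e1, bh_norm_abs x e2, bh_norm_abs x e3]
  linarith [hDH, hHnorm]



private lemma bh_pointwise (ν α β lam γ r : ℝ) (hν : 0 < ν) (hα : 0 < α) (hβ : 0 < β)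
    (hlam : 0 < lam) (hγ0 : 0 < γ) (hr : 0 < r)
    (a a' a'' b b' b'' : ℝ) (ha : |a| ≤ r) (ha' : |a'| ≤ r)
    (hb : |b| ≤ r) (hb' : |b'| ≤ r) :
    |(ν * (-a' + 2 * a - a'') - α * (a * (a' - a)) + β * (a * (1 - a) * (a - γ)) - lam * a)
      - (ν * (-b' + 2 * b - b'') - α * (b * (b' - b)) + β * (b * (1 - b) * (b - γ)) - lam * b)|
    ≤ (ν + α * r) * |a' - b'|
      + (2 * ν + 3 * α * r + β * (3 * r ^ 2 + 2 * r * (1 + γ) + γ) + lam) * |a - b|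
      + ν * |a'' - b''| := by
  obtain ⟨ha1, ha2⟩ := abs_le.1 ha
  obtain ⟨ha1', ha2'⟩ := abs_le.1 ha'
  obtain ⟨hb1, hb2⟩ := abs_le.1 hb
  obtain ⟨hb1', hb2'⟩ := abs_le.1 hb'
  set P : ℝ := -(a ^ 2 + a * b + b ^ 2) + (1 + γ) * (a + b) - γ with hP
  have hPle : |P| ≤ 3 * r ^ 2 + 2 * r * (1 + γ) + γ := by
    rw [abs_le]
    constructor
    · nlinarith [sq_nonneg (a - b), sq_nonneg a, sq_nonneg b]
    · nlinarith [sq_nonneg (a + b)]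
  set X1 : ℝ := ν * (-(a' - b') + 2 * (a - b) - (a'' - b'')) with hX1
  set X2 : ℝ := (-α) * (a * (a' - b') + (b' - a - b) * (a - b)) with hX2
  set X3 : ℝ := β * ((a - b) * P) with hX3
  set X4 : ℝ := (-lam) * (a - b) with hX4
  have key : (ν * (-a' + 2 * a - a'') - α * (a * (a' - a)) + β * (a * (1 - a) * (a - γ)) - lam * a)
      - (ν * (-b' + 2 * b - b'') - α * (b * (b' - b)) + β * (b * (1 - b) * (b - γ)) - lam * b)
      = X1 + X2 + X3 + X4 := by
    rw [hX1, hX2, hX3, hX4, hP]; ring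
  rw [key]
  have tri : |X1 + X2 + X3 + X4| ≤ |X1| + |X2| + |X3| + |X4| := by
    calc |X1 + X2 + X3 + X4| ≤ |X1 + X2 + X3| + |X4| := abs_add_le _ _
      _ ≤ |X1 + X2| + |X3| + |X4| := by linarith [abs_add_le (X1 + X2) X3]
      _ ≤ |X1| + |X2| + |X3| + |X4| := by linarith [abs_add_le X1 X2]
  have t1 : |X1| ≤ ν * |a' - b'| + 2 * ν * |a - b| + ν * |a'' - b''| := by
    rw [hX1, abs_mul, abs_of_pos hν]
    have hin : |(-(a' - b') + 2 * (a - b) - (a'' - b''))|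
        ≤ |a' - b'| + 2 * |a - b| + |a'' - b''| := by
      rw [abs_le]
      constructor <;>
        [ (nlinarith [le_abs_self (a' - b'), neg_abs_le (a' - b'), le_abs_self (a - b),
            neg_abs_le (a - b), le_abs_self (a'' - b''), neg_abs_le (a'' - b'')]);
          (nlinarith [le_abs_self (a' - b'), neg_abs_le (a' - b'), le_abs_self (a - b),
            neg_abs_le (a - b), le_abs_self (a'' - b''), neg_abs_le (a'' - b'')]) ]
    nlinarith [hν.le, abs_nonneg (-(a' - b') + 2 * (a - b) - (a'' - b''))]
  have t2 : |X2| ≤ α * r * |a' - b'| + 3 * α * r * |a - b| := by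
    rw [hX2, abs_mul, abs_neg, abs_of_pos hα]
    have hin : |a * (a' - b') + (b' - a - b) * (a - b)|
        ≤ r * |a' - b'| + 3 * r * |a - b| := by
      calc |a * (a' - b') + (b' - a - b) * (a - b)|
          ≤ |a * (a' - b')| + |(b' - a - b) * (a - b)| := abs_add_le _ _
        _ = |a| * |a' - b'| + |b' - a - b| * |a - b| := by rw [abs_mul, abs_mul]
        _ ≤ r * |a' - b'| + 3 * r * |a - b| := by
            have h3r : |b' - a - b| ≤ 3 * r := abs_le.2 ⟨by linarith, by linarith⟩
            have := mul_le_mul_of_nonneg_right ha (abs_nonneg (a' - b'))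
            have := mul_le_mul_of_nonneg_right h3r (abs_nonneg (a - b))
            linarith
    nlinarith [hα.le, abs_nonneg (a * (a' - b') + (b' - a - b) * (a - b))]
  have t3 : |X3| ≤ β * (3 * r ^ 2 + 2 * r * (1 + γ) + γ) * |a - b| := by
    rw [hX3, abs_mul, abs_of_pos hβ, abs_mul]
    have := mul_le_mul_of_nonneg_left hPle (abs_nonneg (a - b))
    nlinarith [hβ.le, abs_nonneg (a - b)]
  have t4 : |X4| = lam * |a - b| := by
    rw [hX4, abs_mul, abs_neg, abs_of_pos hlam]
  nlinarith [tri, t1, t2, t3, t4]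


/-- The Burgers-Huxley vector field `F(u) = νΛu - α uD⁻u + β u(1-u)(u-γ) - λu + f` is
Lipschitz on the ball `B_r` of `ℓ²(ℤ)` with constant
`L_r = 4ν + 2√5 rα + β√(12r²(1+γ)² + 27r⁴ + 3γ²) + λ`. -/
theorem burgers_huxley_field_lipschitz
    (ν α β lam γ r : ℝ) (hν : 0 < ν) (hα : 0 < α) (hβ : 0 < β) (hlam : 0 < lam)
    (hγ : γ ∈ Set.Ioo (0 : ℝ) 1) (hr : 0 < r)
    (f u v Fu Fv : lp (fun _ : ℤ => ℝ) 2)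
    (hu : ‖u‖ ≤ r) (hv : ‖v‖ ≤ r)
    (hFu : ∀ i : ℤ, Fu i =
      ν * (-u (i - 1) + 2 * u i - u (i + 1))
        - α * (u i * (u (i - 1) - u i))
        + β * (u i * (1 - u i) * (u i - γ))
        - lam * u i + f i)
    (hFv : ∀ i : ℤ, Fv i =
      ν * (-v (i - 1) + 2 * v i - v (i + 1))
        - α * (v i * (v (i - 1) - v i))
        + β * (v i * (1 - v i) * (v i - γ))
        - lam * v i + f i) :
    ‖Fu - Fv‖ ≤
      (4 * ν + 2 * Real.sqrt 5 * r * α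
        + β * Real.sqrt (12 * r ^ 2 * (1 + γ) ^ 2 + 27 * r ^ 4 + 3 * γ ^ 2)
        + lam) * ‖u - v‖ := by
  obtain ⟨hγ0, hγ1⟩ := hγ
  -- coordinatewise bounds
  have hcu : ∀ i : ℤ, |u i| ≤ r := fun i => by
    have := lp.norm_apply_le_norm (p := 2) (by norm_num) u i
    rw [Real.norm_eq_abs] at this; linarith
  have hcv : ∀ i : ℤ, |v i| ≤ r := fun i => by
    have := lp.norm_apply_le_norm (p := 2) (by norm_num) v i
    rw [Real.norm_eq_abs] at this; linarith
  have hwv : ∀ j : ℤ, (u - v) j = u j - v j := fun j => by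
    rw [lp.coeFn_sub]; rfl
  have hFw : ∀ j : ℤ, (Fu - Fv) j = Fu j - Fv j := fun j => by
    rw [lp.coeFn_sub]; rfl
  set C3 : ℝ := 3 * r ^ 2 + 2 * r * (1 + γ) + γ with hC3def
  have hC3 : 0 ≤ C3 := by nlinarith [sq_nonneg r]
  -- pointwise estimate
  have hpt : ∀ i : ℤ, |(Fu - Fv) i|
      ≤ (ν + α * r) * |(u - v) (i - 1)|
        + (2 * ν + 3 * α * r + β * C3 + lam) * |(u - v) i|
        + ν * |(u - v) (i + 1)| := by
    intro i
    rw [hFw i, hwv i, hwv (i - 1), hwv (i + 1), hFu i, hFv i]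
    have e : (ν * (-u (i - 1) + 2 * u i - u (i + 1)) - α * (u i * (u (i - 1) - u i))
          + β * (u i * (1 - u i) * (u i - γ)) - lam * u i + f i)
        - (ν * (-v (i - 1) + 2 * v i - v (i + 1)) - α * (v i * (v (i - 1) - v i))
          + β * (v i * (1 - v i) * (v i - γ)) - lam * v i + f i)
        = (ν * (-u (i - 1) + 2 * u i - u (i + 1)) - α * (u i * (u (i - 1) - u i))
          + β * (u i * (1 - u i) * (u i - γ)) - lam * u i)
        - (ν * (-v (i - 1) + 2 * v i - v (i + 1)) - α * (v i * (v (i - 1) - v i))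
          + β * (v i * (1 - v i) * (v i - γ)) - lam * v i) := by ring
    rw [e]
    exact bh_pointwise ν α β lam γ r hν hα hβ hlam hγ0 hr
      (u i) (u (i - 1)) (u (i + 1)) (v i) (v (i - 1)) (v (i + 1))
      (hcu i) (hcu (i - 1)) (hcv i) (hcv (i - 1))
  have hmain := bh_master (u - v) (Fu - Fv) (ν + α * r)
    (2 * ν + 3 * α * r + β * C3 + lam) ν
    (by positivity) (by positivity) hν.le
    (fun i => by simpa [Real.norm_eq_abs] using hpt i)
  -- compare constants
  have h45 : (4 : ℝ) ≤ 2 * Real.sqrt 5 := by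
    nlinarith [Real.sq_sqrt (by norm_num : (0:ℝ) ≤ 5), Real.sqrt_nonneg 5]
  have hC3sqrt : C3 ≤ Real.sqrt (12 * r ^ 2 * (1 + γ) ^ 2 + 27 * r ^ 4 + 3 * γ ^ 2) := by
    apply Real.le_sqrt_of_sq_le
    rw [hC3def]
    nlinarith [sq_nonneg (2 * r * (1 + γ) - 3 * r ^ 2), sq_nonneg (2 * r * (1 + γ) - γ),
      sq_nonneg (3 * r ^ 2 - γ)]
  have hconst : (ν + α * r) + (2 * ν + 3 * α * r + β * C3 + lam) + ν
      ≤ 4 * ν + 2 * Real.sqrt 5 * r * α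
        + β * Real.sqrt (12 * r ^ 2 * (1 + γ) ^ 2 + 27 * r ^ 4 + 3 * γ ^ 2) + lam := by
    have h1 : 4 * (α * r) ≤ 2 * Real.sqrt 5 * r * α := by
      nlinarith [mul_nonneg (by linarith : (0:ℝ) ≤ 2 * Real.sqrt 5 - 4)
        (mul_nonneg hr.le hα.le)]
    have h2 : β * C3 ≤ β * Real.sqrt (12 * r ^ 2 * (1 + γ) ^ 2 + 27 * r ^ 4 + 3 * γ ^ 2) :=
      mul_le_mul_of_nonneg_left hC3sqrt hβ.le
    linarith
  calc ‖Fu - Fv‖ ≤ ((ν + α * r) + (2 * ν + 3 * α * r + β * C3 + lam) + ν) * ‖u - v‖ := hmain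
    _ ≤ (4 * ν + 2 * Real.sqrt 5 * r * α
        + β * Real.sqrt (12 * r ^ 2 * (1 + γ) ^ 2 + 27 * r ^ 4 + 3 * γ ^ 2)
        + lam) * ‖u - v‖ := mul_le_mul_of_nonneg_right hconst (norm_nonneg _)
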